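/- For z > 0 and n ≥ 1, the expected length of a random self-avoiding walk on K_n satisfies E_z^{(n)}(L) = (n-1) - 1/z + 1/(z χ_z^{(n)}). -/

import Mathlib

open Finset

/-- `c_N^{(n)} = (n-1)!/(n-1-N)!`, the number of `N`-step self-avoiding walks on `K_n`. -/
noncomputable def sawCount (n N : ℕ) : ℝ :=
  (Nat.factorial (n - 1) : ℝ) / (Nat.factorial (n - 1 - N) : ℝ)

/-- The susceptibility `χ_z^{(n)} = ∑_{N=0}^{n-1} c_N^{(n)} z^N`. -/
noncomputable def chi (n : ℕ) (z : ℝ) : ℝ :=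
  ∑ N ∈ Finset.range n, sawCount n N * z ^ N

/-- The expected length `E_z^{(n)}(L) = (∑_N N c_N^{(n)} z^N)/χ_z^{(n)}`. -/
noncomputable def meanL (n : ℕ) (z : ℝ) : ℝ :=
  (∑ N ∈ Finset.range n, (N : ℝ) * sawCount n N * z ^ N) / chi n z


lemma sawCount_zero (n : ℕ) : sawCount n 0 = 1 := by
  simp [sawCount, Nat.factorial_ne_zero]

lemma sawCount_nonneg (n N : ℕ) : 0 ≤ sawCount n N := by
  unfold sawCount
  positivity

lemma sawCount_succ {n N : ℕ} (h : N + 1 < n) :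
    ((n : ℝ) - 1 - N) * sawCount n N = sawCount n (N + 1) := by
  have hcast : (n : ℝ) - 1 - N = ((n - 1 - (N + 1) + 1 : ℕ) : ℝ) := by
    push_cast [Nat.cast_sub (by omega : N + 1 ≤ n - 1), Nat.cast_sub (by omega : 1 ≤ n)]
    ring
  have hsplit : n - 1 - N = n - 1 - (N + 1) + 1 := by omega
  rw [hcast, sawCount, sawCount, hsplit, Nat.factorial_succ, Nat.cast_mul]
  field_simp

lemma chi_pos {n : ℕ} (hn : 1 ≤ n) {z : ℝ} (hz : 0 ≤ z) : 0 < chi n z := by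
  refine sum_pos' (fun N _ => mul_nonneg (sawCount_nonneg n N) (pow_nonneg hz N))
    ⟨0, mem_range.mpr hn, by simp [sawCount_zero]⟩

/- An `(N+1)`-step walk is an `N`-step walk extended to one of the `n - 1 - N` vertices it has
not yet visited. -/
lemma chi_sub_one_eq_sum_extensions {n : ℕ} (hn : 1 ≤ n) (z : ℝ) :
    chi n z - 1 = ∑ N ∈ range n, ((n : ℝ) - 1 - N) * sawCount n N * z ^ (N + 1) := by
  obtain ⟨m, rfl⟩ : ∃ m, n = m + 1 := ⟨n - 1, by omega⟩
  have hlast : ((m + 1 : ℕ) : ℝ) - 1 - m = 0 := by push_cast; ring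
  rw [chi, sum_range_succ', sum_range_succ, hlast, sawCount_zero]
  simp only [zero_mul, add_zero, pow_zero, mul_one, add_sub_cancel_right]
  refine sum_congr rfl fun N hN => ?_
  rw [mul_assoc, ← sawCount_succ (Nat.succ_lt_succ (mem_range.mp hN))]
  ring

theorem meanL_eq (n : ℕ) (hn : 1 ≤ n) (z : ℝ) (hz : 0 < z) :
    meanL n z = ((n : ℝ) - 1) - 1 / z + 1 / (z * chi n z) := by
  have hchi := chi_pos hn hz.le
  have hext : ∑ N ∈ range n, ((n : ℝ) - 1 - N) * sawCount n N * z ^ (N + 1)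
      = z * (((n : ℝ) - 1) * chi n z - ∑ N ∈ range n, (N : ℝ) * sawCount n N * z ^ N) := by
    rw [chi, mul_sum, ← sum_sub_distrib, mul_sum]
    exact sum_congr rfl fun N _ => by ring
  have hextensions := chi_sub_one_eq_sum_extensions hn z
  rw [hext] at hextensions
  rw [meanL]
  field_simp
  linear_combination hextensions
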